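/- For k ≥ 5, if H is a k-uniform hypergraph with no isolated vertices, no isolated edges and no multiple edges, then 7·τ_t(H) ≤ 2·n(H) + 2·m(H) − n₁(H), where n₁(H) is the number of degree-1 vertices of H. -/

import Mathlib

open Finset

attribute [local instance] Classical.propDecidable

variable {V : Type*} [Fintype V] [DecidableEq V]

/-- Two vertices are adjacent (neighbors) in a hypergraph if they are distinct
and share a common edge. -/
def HAdj (E : Finset (Finset V)) (u v : V) : Prop :=
  u ≠ v ∧ ∃ e ∈ E, u ∈ e ∧ v ∈ e

/-- A hypergraph is `k`-uniform if every edge has exactly `k` vertices. -/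
def Uniform (k : ℕ) (E : Finset (Finset V)) : Prop := ∀ e ∈ E, e.card = k

/-- No edge is isolated: every edge intersects some other edge. -/
def NoIsolatedEdge (E : Finset (Finset V)) : Prop :=
  ∀ e ∈ E, ∃ f ∈ E, f ≠ e ∧ ∃ v, v ∈ e ∧ v ∈ f

/-- The degree of a vertex: the number of edges containing it. -/
def hdeg (E : Finset (Finset V)) (v : V) : ℕ := (E.filter (fun e => v ∈ e)).card

/-- The number of vertices of degree exactly 1. -/
noncomputable def n1 (E : Finset (Finset V)) : ℕ :=
  (univ.filter (fun v => hdeg E v = 1)).card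

/-- The total domination number: minimum size of a set `D` such that every
vertex has a neighbor in `D`. -/
noncomputable def gammat (E : Finset (Finset V)) : ℕ :=
  sInf {n | ∃ D : Finset V, (∀ v : V, ∃ u ∈ D, HAdj E v u) ∧ D.card = n}

/-- The transversal number: minimum size of a vertex set meeting every edge. -/
noncomputable def tauh (E : Finset (Finset V)) : ℕ :=
  sInf {n | ∃ T : Finset V, (∀ e ∈ E, ∃ v ∈ T, v ∈ e) ∧ T.card = n}

/-- The total transversal number: minimum size of a transversal `T` in which
every vertex of `T` has a neighbor in `T`. -/
noncomputable def taut (E : Finset (Finset V)) : ℕ :=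
  sInf {n | ∃ T : Finset V, (∀ e ∈ E, ∃ v ∈ T, v ∈ e) ∧
    (∀ v ∈ T, ∃ u ∈ T, HAdj E v u) ∧ T.card = n}

/-- The strong transversal number: minimum size of a vertex set containing at
least two vertices from every edge. -/
noncomputable def tau2 (E : Finset (Finset V)) : ℕ :=
  sInf {n | ∃ T : Finset V, (∀ e ∈ E, 2 ≤ (e ∩ T).card) ∧ T.card = n}


/-! Grow a partial total transversal `A` while deleting from `E` the edges it already meets, and
track the potential `Φ(F) = 2|F| + ∑ᵥ min(d_F(v), 2)` of the remaining hypergraph `F`; when `E` has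
no isolated vertices, `Φ(E) = 2n + 2m - n₁`. As long as `F` is nonempty, some set `S` of one or two
vertices, each with a neighbour in `A ∪ S`, lowers `Φ` by at least `7|S|` when the edges of `F`
meeting `S` are deleted. If all degrees in `F` are at most one, `S` is a vertex of an edge of `F`
that also lies in an edge outside `F`, which `A` meets; otherwise `S` is a pair in an edge through a
vertex `v` of maximum degree, chosen by cases on the degree of `v` and on how the edges at `v` meet
the other edges. Uniformity with `k ≥ 5` is what makes every case pay `7` per vertex. -/

section Adjacency

omit [Fintype V] [DecidableEq V]

theorem HAdj.symm {E : Finset (Finset V)} {u v : V} (h : HAdj E u v) : HAdj E v u :=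
  ⟨h.1.symm, h.2.imp fun _ ⟨he, hu, hv⟩ => ⟨he, hv, hu⟩⟩

theorem HAdj.mono {F E : Finset (Finset V)} (hFE : F ⊆ E) {u v : V} (h : HAdj F u v) :
    HAdj E u v :=
  ⟨h.1, h.2.imp fun _ ⟨he, hu, hv⟩ => ⟨hFE he, hu, hv⟩⟩

def IsTotalTransversal (E : Finset (Finset V)) (T : Finset V) : Prop :=
  (∀ e ∈ E, ∃ v ∈ T, v ∈ e) ∧ ∀ v ∈ T, ∃ u ∈ T, HAdj E v u

theorem taut_le_card {E : Finset (Finset V)} {T : Finset V} (hT : IsTotalTransversal E T) :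
    taut E ≤ T.card :=
  Nat.sInf_le ⟨T, hT.1, hT.2, rfl⟩

end Adjacency

section Degree

omit [Fintype V]

variable {F F' : Finset (Finset V)} {e f : Finset V} {S : Finset V} {v u x : V}

def edgesAvoiding (F : Finset (Finset V)) (S : Finset V) : Finset (Finset V) :=
  F.filter (fun e => Disjoint S e)

@[simp]
theorem mem_edgesAvoiding : e ∈ edgesAvoiding F S ↔ e ∈ F ∧ Disjoint S e :=
  mem_filter

theorem edgesAvoiding_subset : edgesAvoiding F S ⊆ F :=
  filter_subset _ _

theorem edgesAvoiding_anti {S' : Finset V} (h : S ⊆ S') :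
    edgesAvoiding F S' ⊆ edgesAvoiding F S :=
  fun _ he => mem_edgesAvoiding.2
    ⟨(mem_edgesAvoiding.1 he).1, (mem_edgesAvoiding.1 he).2.mono_left h⟩

theorem hdeg_mono (h : F' ⊆ F) (v : V) : hdeg F' v ≤ hdeg F v :=
  card_le_card (filter_subset_filter _ h)

theorem one_le_hdeg (he : e ∈ F) (hv : v ∈ e) : 1 ≤ hdeg F v :=
  card_pos.2 ⟨e, mem_filter.2 ⟨he, hv⟩⟩

theorem two_le_hdeg (he : e ∈ F) (hf : f ∈ F) (hef : e ≠ f) (hve : v ∈ e) (hvf : v ∈ f) :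
    2 ≤ hdeg F v := by
  rw [← card_pair hef]
  refine card_le_card fun g hg => ?_
  rcases mem_insert.1 hg with rfl | hg
  · exact mem_filter.2 ⟨he, hve⟩
  · exact mem_filter.2 ⟨mem_singleton.1 hg ▸ hf, mem_singleton.1 hg ▸ hvf⟩

theorem hdeg_lt (h : F' ⊆ F) (he : e ∈ F) (he' : e ∉ F') (hv : v ∈ e) : hdeg F' v < hdeg F v :=
  card_lt_card ⟨filter_subset_filter _ h,
    fun hsub => he' (mem_filter.1 (hsub (mem_filter.2 ⟨he, hv⟩))).1⟩

theorem min_hdeg_lt (h : F' ⊆ F) (he : e ∈ F) (he' : e ∉ F') (hv : v ∈ e)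
    (hsmall : hdeg F' v ≤ 1 ∨ hdeg F v ≤ 2) : min (hdeg F' v) 2 < min (hdeg F v) 2 := by
  have := hdeg_lt h he he' hv
  omega

theorem hdeg_edgesAvoiding_of_mem (hx : x ∈ S) : hdeg (edgesAvoiding F S) x = 0 :=
  card_eq_zero.2 <| filter_eq_empty_iff.2 fun _ he hxe =>
    disjoint_left.1 (mem_edgesAvoiding.1 he).2 hx hxe

theorem card_sdiff_edgesAvoiding_pair :
    (F \ edgesAvoiding F {v, u}).card = hdeg F v + hdeg (edgesAvoiding F {v}) u := by
  have : F \ edgesAvoiding F {v, u} =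
      F.filter (fun e => v ∈ e) ∪ (edgesAvoiding F {v}).filter (fun e => u ∈ e) := by
    ext e
    simp only [mem_sdiff, mem_edgesAvoiding, mem_union, mem_filter, disjoint_insert_left,
      disjoint_singleton_left]
    tauto
  rw [this, card_union_of_disjoint]
  · rfl
  · refine disjoint_left.2 fun e h₁ h₂ => ?_
    simp only [mem_filter, mem_edgesAvoiding, disjoint_singleton_left] at h₁ h₂
    exact h₂.1.2 h₁.2

end Degree

section Potential

variable {F F' : Finset (Finset V)} {e h g : Finset V} {v u : V} {k : ℕ}

noncomputable def potential (F : Finset (Finset V)) : ℕ :=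
  2 * F.card + ∑ v, min (hdeg F v) 2

theorem potential_mono (h : F' ⊆ F) : potential F' ≤ potential F := by
  have hsum : ∑ v, min (hdeg F' v) 2 ≤ ∑ v, min (hdeg F v) 2 :=
    sum_le_sum fun v _ => min_le_min_right 2 (hdeg_mono h v)
  have := card_le_card h
  unfold potential
  omega

theorem potential_add_le (h : F' ⊆ F) {W₁ W₂ : Finset V} (hW : Disjoint W₁ W₂)
    (h₁ : ∀ w ∈ W₁, min (hdeg F' w) 2 < min (hdeg F w) 2)
    (h₂ : ∀ w ∈ W₂, min (hdeg F' w) 2 + 2 ≤ min (hdeg F w) 2) :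
    potential F' + 2 * (F \ F').card + W₁.card + 2 * W₂.card ≤ potential F := by
  have hpt : ∀ w, min (hdeg F' w) 2 + ((if w ∈ W₁ then 1 else 0) + (if w ∈ W₂ then 2 else 0))
      ≤ min (hdeg F w) 2 := by
    intro w
    have := min_le_min_right 2 (hdeg_mono h w)
    by_cases hw₁ : w ∈ W₁
    · have := h₁ w hw₁
      simp only [hw₁, disjoint_left.1 hW hw₁, if_true, if_false]
      omega
    · by_cases hw₂ : w ∈ W₂
      · have := h₂ w hw₂
        simp only [hw₁, hw₂, if_true, if_false]
        omega
      · simp only [hw₁, hw₂, if_false]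
        omega
  have hsum := sum_le_sum fun w (_ : w ∈ univ) => hpt w
  rw [sum_add_distrib, sum_add_distrib, sum_ite_mem, sum_ite_mem, univ_inter, univ_inter,
    sum_const, sum_const, smul_eq_mul, smul_eq_mul] at hsum
  have := card_sdiff_add_card_eq_card h
  unfold potential
  omega

theorem potential_add_n1 {E : Finset (Finset V)} (hv : ∀ v, ∃ e ∈ E, v ∈ e) :
    potential E + n1 E = 2 * E.card + 2 * Fintype.card V := by
  have hpt : ∀ v, min (hdeg E v) 2 + (if hdeg E v = 1 then 1 else 0) = 2 := by
    intro v
    obtain ⟨e, he, hve⟩ := hv v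
    have := one_le_hdeg he hve
    split_ifs <;> omega
  rw [potential, n1, card_filter, add_assoc, ← sum_add_distrib, sum_congr rfl fun v _ => hpt v,
    sum_const, card_univ, smul_eq_mul]
  ring

theorem adj_and_potential_add_le_of_ten_le (hv : 2 ≤ hdeg F v) (hh : h ∈ F) (hvh : v ∈ h)
    (huh : u ∈ h) (hu : 1 ≤ hdeg (edgesAvoiding F {v}) u) {W : Finset V}
    (hW : ∀ w ∈ W, min (hdeg (edgesAvoiding F {v, u}) w) 2 < min (hdeg F w) 2)
    (hcount : 10 ≤ 2 * (hdeg F v + hdeg (edgesAvoiding F {v}) u) + (W \ {v, u}).card) :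
    HAdj F v u ∧ potential (edgesAvoiding F {v, u}) + 14 ≤ potential F := by
  have hvu : v ≠ u := by
    rintro rfl
    rw [hdeg_edgesAvoiding_of_mem (mem_singleton_self v)] at hu
    omega
  have hu₂ : 2 ≤ hdeg F u := by
    have := hdeg_lt (edgesAvoiding_subset (S := {v})) hh (by simp [hvh]) huh
    omega
  have hvu₂ : ∀ w ∈ ({v, u} : Finset V), min (hdeg (edgesAvoiding F {v, u}) w) 2 + 2
      ≤ min (hdeg F w) 2 := by
    intro w hw
    rw [hdeg_edgesAvoiding_of_mem hw]
    rcases mem_insert.1 hw with rfl | hw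
    · omega
    · rw [mem_singleton.1 hw]
      omega
  have := potential_add_le edgesAvoiding_subset sdiff_disjoint
    (fun w hw => hW w (mem_sdiff.1 hw).1) hvu₂
  rw [card_sdiff_edgesAvoiding_pair, card_pair hvu] at this
  exact ⟨⟨hvu, h, hh, hvh, huh⟩, by omega⟩

theorem exists_adj_and_potential_add_le_of_dominant (hk : 5 ≤ k) (hu : Uniform k F)
    (hv : 2 ≤ hdeg F v)
    (hdom : ∀ h ∈ F, v ∈ h → ∀ x ∈ h, hdeg (edgesAvoiding F {v}) x = 0) :
    ∃ u, HAdj F v u ∧ potential (edgesAvoiding F {v, u}) + 14 ≤ potential F := by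
  obtain ⟨e, he, f, hf, hef⟩ := one_lt_card.1 (show 1 < (F.filter fun e => v ∈ e).card from hv)
  rw [mem_filter] at he hf
  obtain ⟨u, hu'⟩ : (e.erase v).Nonempty := by
    rw [← card_pos, card_erase_of_mem he.2, hu e he.1]
    omega
  have hvu : v ≠ u := (ne_of_mem_erase hu').symm
  have hsub : edgesAvoiding F {v, u} ⊆ edgesAvoiding F {v} :=
    edgesAvoiding_anti (singleton_subset_iff.2 (mem_insert_self v {u}))
  have hzero : ∀ x ∈ e ∪ f, hdeg (edgesAvoiding F {v, u}) x = 0 := by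
    intro x hx
    have := hdeg_mono hsub x
    rcases mem_union.1 hx with hx | hx
    · have := hdom e he.1 he.2 x hx
      omega
    · have := hdom f hf.1 hf.2 x hx
      omega
  have hsym : ∀ x ∈ (e ∪ f) \ (e ∩ f),
      min (hdeg (edgesAvoiding F {v, u}) x) 2 < min (hdeg F x) 2 := by
    intro x hx
    have hx := (mem_sdiff.1 hx).1
    rw [hzero x hx]
    rcases mem_union.1 hx with hx | hx
    · have := one_le_hdeg he.1 hx
      omega
    · have := one_le_hdeg hf.1 hx
      omega
  have hinter : ∀ x ∈ e ∩ f, min (hdeg (edgesAvoiding F {v, u}) x) 2 + 2 ≤ min (hdeg F x) 2 := by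
    intro x hx
    rw [mem_inter] at hx
    have := two_le_hdeg he.1 hf.1 hef hx.1 hx.2
    rw [hzero x (mem_union_left f hx.1)]
    omega
  have := potential_add_le edgesAvoiding_subset sdiff_disjoint hsym hinter
  have hedges : 2 ≤ (F \ edgesAvoiding F {v, u}).card := by
    rw [card_sdiff_edgesAvoiding_pair]
    exact hv.trans (Nat.le_add_right _ _)
  have hunion := card_union_add_card_inter e f
  have hsdiff := card_sdiff_add_card_eq_card (inter_subset_union (s := e) (t := f))
  rw [hu e he.1, hu f hf.1] at hunion
  exact ⟨u, ⟨hvu, e, he.1, he.2, mem_of_mem_erase hu'⟩, by omega⟩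

theorem adj_and_potential_add_le_of_three_le (hk : 4 ≤ k) (hu : Uniform k F)
    (hv : 3 ≤ hdeg F v) (hh : h ∈ F) (hvh : v ∈ h) (huh : u ∈ h)
    (hu₁ : 1 ≤ hdeg (edgesAvoiding F {v}) u)
    (hh₁ : ∀ x ∈ h, hdeg (edgesAvoiding F {v}) x ≤ 1) :
    HAdj F v u ∧ potential (edgesAvoiding F {v, u}) + 14 ≤ potential F := by
  have hsub : edgesAvoiding F {v, u} ⊆ edgesAvoiding F {v} :=
    edgesAvoiding_anti (singleton_subset_iff.2 (mem_insert_self v {u}))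
  refine adj_and_potential_add_le_of_ten_le (by omega) hh hvh huh hu₁ (W := h)
    (fun x hx => min_hdeg_lt edgesAvoiding_subset hh (by simp [hvh]) hx
      (Or.inl ((hdeg_mono hsub x).trans (hh₁ x hx)))) ?_
  have := le_card_sdiff {v, u} h
  have := card_le_two (a := v) (b := u)
  rw [hu h hh] at *
  omega

theorem adj_and_potential_add_le_of_hdeg_le_two (hk : 5 ≤ k) (hu : Uniform k F)
    (hmax : ∀ x, hdeg F x ≤ 2) (hv : 2 ≤ hdeg F v) (hh : h ∈ F) (hvh : v ∈ h) (huh : u ∈ h)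
    (hg : g ∈ edgesAvoiding F {v}) (hug : u ∈ g) :
    HAdj F v u ∧ potential (edgesAvoiding F {v, u}) + 14 ≤ potential F := by
  rw [mem_edgesAvoiding, disjoint_singleton_left] at hg
  have hgh : g ⊂ h ∪ g := Finset.ssubset_iff_subset_ne.2 ⟨subset_union_right,
    fun hgh => hg.2 (hgh ▸ mem_union_left g hvh)⟩
  have hdrop : ∀ x ∈ h ∪ g, min (hdeg (edgesAvoiding F {v, u}) x) 2 < min (hdeg F x) 2 := by
    intro x hx
    rcases mem_union.1 hx with hx | hx
    · exact min_hdeg_lt edgesAvoiding_subset hh (by simp [hvh]) hx (Or.inr (hmax x))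
    · exact min_hdeg_lt edgesAvoiding_subset hg.1 (by simp [hug]) hx (Or.inr (hmax x))
  refine adj_and_potential_add_le_of_ten_le hv hh hvh huh (one_le_hdeg (by simp [hg]) hug)
    hdrop ?_
  have := card_lt_card hgh
  have := le_card_sdiff {v, u} (h ∪ g)
  have := card_le_two (a := v) (b := u)
  have := one_le_hdeg (F := edgesAvoiding F {v}) (by simp [hg]) hug
  rw [hu g hg.1] at *
  omega

theorem exists_adj_and_potential_add_le (hk : 5 ≤ k) (hu : Uniform k F)
    (h₂ : ∃ x, 2 ≤ hdeg F x) :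
    ∃ v u, HAdj F v u ∧ potential (edgesAvoiding F {v, u}) + 14 ≤ potential F := by
  obtain ⟨v, -, hmax⟩ :=
    (univ : Finset V).exists_max_image (hdeg F) (h₂.imp fun x _ => mem_univ x)
  have hv : 2 ≤ hdeg F v := h₂.elim fun x hx => hx.trans (hmax x (mem_univ x))
  by_cases hdom : ∀ h ∈ F, v ∈ h → ∀ x ∈ h, hdeg (edgesAvoiding F {v}) x = 0
  · exact ⟨v, exists_adj_and_potential_add_le_of_dominant hk hu hv hdom⟩
  push Not at hdom
  obtain ⟨h, hh, hvh, u, huh, hu₁⟩ := hdom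
  by_cases h₅ : ∃ h ∈ F, v ∈ h ∧ ∃ u ∈ h, 1 ≤ hdeg (edgesAvoiding F {v}) u ∧
      5 ≤ hdeg F v + hdeg (edgesAvoiding F {v}) u
  · obtain ⟨h, hh, hvh, u, huh, hu₁, hu₅⟩ := h₅
    exact ⟨v, u,
      adj_and_potential_add_le_of_ten_le hv hh hvh huh hu₁ (W := ∅) (by simp) (by omega)⟩
  push Not at h₅
  -- Now `hdeg F v ≤ 3`, and when it is `3`, each vertex of `h` lies in at most one edge
  -- avoiding `v`.
  have hv₄ := h₅ h hh hvh u huh (Nat.one_le_iff_ne_zero.2 hu₁)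
  rcases (show hdeg F v = 2 ∨ 3 ≤ hdeg F v by omega) with hv₂ | hv₃
  · obtain ⟨g, hg⟩ := card_pos.1 (Nat.pos_of_ne_zero hu₁)
    rw [mem_filter] at hg
    exact ⟨v, u, adj_and_potential_add_le_of_hdeg_le_two hk hu
      (fun x => hv₂ ▸ hmax x (mem_univ x)) hv hh hvh huh hg.1 hg.2⟩
  · refine ⟨v, u, adj_and_potential_add_le_of_three_le (by omega) hu hv₃ hh hvh huh
      (Nat.one_le_iff_ne_zero.2 hu₁) fun x hx => ?_⟩
    by_contra! hx₂
    have := h₅ h hh hvh x hx (by omega)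
    omega

theorem potential_edgesAvoiding_singleton_add_le (hk : 5 ≤ k) (hu : Uniform k F)
    (he : e ∈ F) (hve : v ∈ e) (h₂ : ∀ x ∈ e, hdeg F x ≤ 2) :
    potential (edgesAvoiding F {v}) + 7 ≤ potential F := by
  have hdrop : ∀ x ∈ e, min (hdeg (edgesAvoiding F {v}) x) 2 < min (hdeg F x) 2 :=
    fun x hx => min_hdeg_lt edgesAvoiding_subset he (by simp [hve]) hx (Or.inr (h₂ x hx))
  have := potential_add_le edgesAvoiding_subset (disjoint_empty_right e) hdrop (by simp)
  have : 1 ≤ (F \ edgesAvoiding F {v}).card := card_pos.2 ⟨e, by simp [he, hve]⟩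
  rw [hu e he] at *
  simp only [card_empty] at *
  omega

end Potential

section Reduction

variable {k : ℕ} {E F : Finset (Finset V)} {A : Finset V}

theorem exists_reducing_set (hk : 5 ≤ k) (hu : Uniform k E) (hE : NoIsolatedEdge E)
    (hFE : F ⊆ E) (hF : F.Nonempty) (hA : ∀ e ∈ E \ F, ∃ a ∈ A, a ∈ e)
    (hFA : ∀ e ∈ F, Disjoint A e) :
    ∃ S : Finset V, S.Nonempty ∧ (∀ s ∈ S, ∃ b ∈ A ∪ S, HAdj E s b) ∧
      potential (edgesAvoiding F S) + 7 * S.card ≤ potential F := by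
  have huF : Uniform k F := fun e he => hu e (hFE he)
  by_cases h₂ : ∃ x, 2 ≤ hdeg F x
  · obtain ⟨v, u, hvu, hdrop⟩ := exists_adj_and_potential_add_le hk huF h₂
    have hvuE := hvu.mono hFE
    refine ⟨{v, u}, insert_nonempty v {u}, ?_, by rwa [card_pair hvu.1]⟩
    simp only [mem_insert, mem_singleton, mem_union]
    rintro s (rfl | rfl)
    · exact ⟨u, Or.inr (Or.inr rfl), hvuE⟩
    · exact ⟨v, Or.inr (Or.inl rfl), hvuE.symm⟩
  push Not at h₂
  obtain ⟨e, he⟩ := hF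
  obtain ⟨g, hg, hge, w, hwe, hwg⟩ := hE e (hFE he)
  have hgF : g ∉ F := fun hgF => (two_le_hdeg he hgF hge.symm hwe hwg).not_gt (h₂ w)
  obtain ⟨a, ha, hag⟩ := hA g (mem_sdiff.2 ⟨hg, hgF⟩)
  have hwa : w ≠ a := by
    rintro rfl
    exact disjoint_left.1 (hFA e he) ha hwe
  refine ⟨{w}, singleton_nonempty w, ?_, ?_⟩
  · simp only [mem_singleton, forall_eq]
    exact ⟨a, mem_union_left _ ha, hwa, g, hg, hwg, hag⟩
  · simpa using potential_edgesAvoiding_singleton_add_le hk huF he hwe fun x _ => (h₂ x).le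

theorem exists_isTotalTransversal_card_le (hk : 5 ≤ k) (hu : Uniform k E)
    (hE : NoIsolatedEdge E) (hFE : F ⊆ E) (hA : ∀ e ∈ E \ F, ∃ a ∈ A, a ∈ e)
    (hAadj : ∀ a ∈ A, ∃ b ∈ A, HAdj E a b) :
    ∃ T, IsTotalTransversal E T ∧ 7 * T.card ≤ 7 * A.card + potential F := by
  induction F using Finset.strongInduction generalizing A with
  | H F ih =>
  obtain rfl | hF := F.eq_empty_or_nonempty
  · exact ⟨A, ⟨fun e he => hA e (by simpa using he), hAadj⟩, Nat.le_add_right _ _⟩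
  by_cases hFA : ∃ e ∈ F, ¬Disjoint A e
  · obtain ⟨e, he, heA⟩ := hFA
    have hA' : ∀ e' ∈ E \ F.erase e, ∃ a ∈ A, a ∈ e' := by
      intro e' he'
      by_cases he'e : e' = e
      · obtain ⟨a, ha, hae⟩ := not_disjoint_iff.1 heA
        exact ⟨a, ha, he'e ▸ hae⟩
      · exact hA e' (by simp_all)
    obtain ⟨T, hT, hcard⟩ :=
      ih (F.erase e) (erase_ssubset he) ((erase_subset e F).trans hFE) hA' hAadj
    exact ⟨T, hT, hcard.trans (Nat.add_le_add_left (potential_mono (erase_subset e F)) _)⟩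
  push Not at hFA
  obtain ⟨S, hS, hSadj, hdrop⟩ := exists_reducing_set hk hu hE hFE hF hA hFA
  have hssub : edgesAvoiding F S ⊂ F := by
    refine ssubset_of_subset_of_ne edgesAvoiding_subset fun heq => ?_
    rw [heq] at hdrop
    have := hS.card_pos
    omega
  have hAS : ∀ e ∈ E \ edgesAvoiding F S, ∃ a ∈ A ∪ S, a ∈ e := by
    intro e he
    by_cases heF : e ∈ F
    · obtain ⟨s, hs, hse⟩ := not_disjoint_iff.1 fun h =>
        (mem_sdiff.1 he).2 (mem_edgesAvoiding.2 ⟨heF, h⟩)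
      exact ⟨s, mem_union_right A hs, hse⟩
    · obtain ⟨a, ha, hae⟩ := hA e (mem_sdiff.2 ⟨(mem_sdiff.1 he).1, heF⟩)
      exact ⟨a, mem_union_left S ha, hae⟩
  have hASadj : ∀ a ∈ A ∪ S, ∃ b ∈ A ∪ S, HAdj E a b := by
    intro a ha
    rcases mem_union.1 ha with ha | ha
    · obtain ⟨b, hb, hab⟩ := hAadj a ha
      exact ⟨b, mem_union_left S hb, hab⟩
    · exact hSadj a ha
  obtain ⟨T, hT, hcard⟩ := ih _ hssub (edgesAvoiding_subset.trans hFE) hAS hASadj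
  have := card_union_le A S
  exact ⟨T, hT, by omega⟩

end Reduction

/-- For `k ≥ 5`, if `H` is a `k`-uniform hypergraph with no isolated vertices,
no isolated edges and no multiple edges, then
`7·τ_t(H) ≤ 2·n(H) + 2·m(H) − n₁(H)`. -/
theorem stmt9 (k : ℕ) (hk : 5 ≤ k) (E : Finset (Finset V)) (hu : Uniform k E)
    (hv : ∀ v : V, ∃ e ∈ E, v ∈ e) (he : NoIsolatedEdge E) :
    7 * taut E ≤ 2 * Fintype.card V + 2 * E.card - n1 E := by
  obtain ⟨T, hT, hcard⟩ := exists_isTotalTransversal_card_le (A := ∅) hk hu he Subset.rfl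
    (by simp) (by simp)
  have := taut_le_card hT
  have := potential_add_n1 hv
  rw [card_empty] at hcard
  omega
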